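/- Case (III): Suppose χ₁ has order exactly r and χ₂ has order exactly s. Then every representation (V, ρ, X, Y) additionally satisfying X^r = id_V, Y^s = id_V, and X∘Y = χ₂(g₁)·Y∘X decomposes as a direct sum of irreducible subrepresentations (subspaces stable under X, Y and all ρ(h), irreducible under this action). (This expresses that the algebra A(ξ) of case (III) is semisimple.) -/

import Mathlib

/-!
The operators `X`, `Y` and `ρ(h)` are units of `End V` of finite order which commute up to
roots of unity of order dividing `|Γ|`. Modulo the finite central group of these scalars they
generate a finite abelian group, so the group they generate in `GL(V)` is finite. By Maschke's
theorem every subspace stable under this group has a stable complement, and in a modular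
lattice of finite length this lets one split off minimal stable subspaces one at a time.
-/

noncomputable section

/-- `(V, ρ, X, Y)` is a representation of the common part of the rank-2 algebra `A(ξ)`:
`ρ` is a group homomorphism (recorded via multiplicativity and unitality),
`ρ(h)∘X = χ₁(h)·(X∘ρ(h))` and `ρ(h)∘Y = χ₂(h)·(Y∘ρ(h))` for all `h ∈ Γ`, and
`ρ(g) = ξ(g)·id` for all `g ∈ Λ`. -/
def IsRep {Γ : Type*} [CommGroup Γ] (χ₁ χ₂ : Γ →* ℂˣ) (Λ : Subgroup Γ) (ξ : ↥Λ →* ℂˣ)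
    {V : Type*} [AddCommGroup V] [Module ℂ V]
    (ρ : Γ → Module.End ℂ V) (X Y : Module.End ℂ V) : Prop :=
  (∀ a b : Γ, ρ (a * b) = ρ a * ρ b) ∧ ρ 1 = 1 ∧
  (∀ h : Γ, ρ h * X = (χ₁ h : ℂ) • (X * ρ h)) ∧
  (∀ h : Γ, ρ h * Y = (χ₂ h : ℂ) • (Y * ρ h)) ∧
  ∀ g : Λ, ρ (g : Γ) = (ξ g : ℂ) • (1 : Module.End ℂ V)

/-- A subspace `W` is stable under `X`, `Y` and all `ρ(h)`. -/
def Stable2 {Γ : Type*} {V : Type*} [AddCommGroup V] [Module ℂ V]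
    (ρ : Γ → Module.End ℂ V) (X Y : Module.End ℂ V) (W : Submodule ℂ V) : Prop :=
  (∀ v ∈ W, X v ∈ W) ∧ (∀ v ∈ W, Y v ∈ W) ∧ ∀ h : Γ, ∀ v ∈ W, ρ h v ∈ W

/-- Irreducibility: `V ≠ 0` and the only subspaces stable under `X`, `Y` and all `ρ(h)`
are `0` and `V`. -/
def Irred2 {Γ : Type*} {V : Type*} [AddCommGroup V] [Module ℂ V]
    (ρ : Γ → Module.End ℂ V) (X Y : Module.End ℂ V) : Prop :=
  (∃ v : V, v ≠ 0) ∧ ∀ W : Submodule ℂ V, Stable2 ρ X Y W → W = ⊥ ∨ W = ⊤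

open Module.End
open scoped commutatorElement

namespace Subgroup

variable {G : Type*} [Group G]

theorem finite_closure_of_pairwise_commute {T : Set G} [Finite T]
    (hT : ∀ t ∈ T, IsOfFinOrder t) (hcomm : T.Pairwise Commute) : Finite (closure T) := by
  have : Fintype T := Fintype.ofFinite T
  have hzpow : Pairwise fun s t : T => ∀ x y : G, x ∈ zpowers (s : G) → y ∈ zpowers (t : G) →
      Commute x y := by
    rintro s t hst _ _ ⟨m, rfl⟩ ⟨n, rfl⟩
    exact (hcomm s.2 t.2 (Subtype.coe_ne_coe.mpr hst)).zpow_zpow m n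
  have : ∀ t : T, Finite (zpowers (t : G)) := fun t => (hT t t.2).finite_zpowers.to_subtype
  have hrange : (noncommPiCoprod hzpow).range = closure T := by
    simp_rw [noncommPiCoprod_range, zpowers_eq_closure]
    rw [← closure_iUnion, Set.iUnion_of_singleton_coe]
  rw [← hrange]
  exact Finite.of_surjective _ (noncommPiCoprod hzpow).rangeRestrict_surjective

theorem finite_closure_of_commutator_mem {C : Subgroup G} [C.Normal] [Finite C] {S : Set G}
    [Finite S] (hS : ∀ s ∈ S, IsOfFinOrder s) (hcomm : ∀ s ∈ S, ∀ t ∈ S, ⁅s, t⁆ ∈ C) :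
    Finite (closure S) := by
  let π := QuotientGroup.mk' C
  let f := π.comp (closure S).subtype
  have hker : Finite f.ker := by
    refine Finite.of_injective
      (fun x : f.ker => (⟨x.1.1, (QuotientGroup.eq_one_iff _).mp x.2⟩ : C)) fun x y h => ?_
    ext
    exact congrArg (fun z : C => (z : G)) h
  have hrange : closure (π '' S) = f.range := by
    rw [MonoidHom.range_comp, range_subtype, MonoidHom.map_closure]
  have hfin : Finite (closure (π '' S)) := by
    refine finite_closure_of_pairwise_commute ?_ ?_
    · rintro _ ⟨s, hs, rfl⟩
      exact π.isOfFinOrder (hS s hs)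
    · rintro _ ⟨s, hs, rfl⟩ _ ⟨t, ht, rfl⟩ -
      rw [← commutatorElement_eq_one_iff_commute, ← map_commutatorElement]
      exact (QuotientGroup.eq_one_iff _).mpr (hcomm s hs t ht)
  rw [hrange] at hfin
  exact f.finite_iff_finite_ker_range.mpr ⟨hker, hfin⟩

end Subgroup

theorem Units.commutatorElement_eq_map_algebraMap {K A : Type*} [CommSemiring K] [Ring A]
    [Algebra K A] {u v : Aˣ} {c : Kˣ} (h : (u * v : A) = (c : K) • (v * u : A)) :
    ⁅u, v⁆ = Units.map (algebraMap K A : K →* A) c := by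
  have huv : u * v = Units.map (algebraMap K A : K →* A) c * (v * u) :=
    Units.ext (by simpa [Algebra.smul_def] using h)
  rw [commutatorElement_def, huv]
  group

section Maschke

variable {K V : Type*} [Field K] [AddCommGroup V] [Module K V]

theorem mem_invtSubmodule_of_mem_closure {S : Set (Module.End K V)ˣ}
    [Finite (Subgroup.closure S)] {W : Submodule K V}
    (hW : ∀ s ∈ S, W ∈ invtSubmodule (s : Module.End K V)) :
    ∀ g ∈ Subgroup.closure S, W ∈ invtSubmodule (g : Module.End K V) := by
  have hfin : ∀ s ∈ S, IsOfFinOrder s := fun s hs =>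
    (Subgroup.closure S).subtype.isOfFinOrder
      (isOfFinOrder_of_finite (⟨s, Subgroup.subset_closure hs⟩ : Subgroup.closure S))
  intro g hg
  rw [← Subgroup.mem_toSubmonoid, Subgroup.closure_toSubmonoid_of_isOfFinOrder hfin] at hg
  induction hg using Submonoid.closure_induction with
  | mem s hs => exact hW s hs
  | one => exact fun v hv => hv
  | mul a b _ _ ha hb => exact fun v hv => ha (hb hv)

theorem exists_isCompl_invtSubmodule_of_finite_closure {S : Set (Module.End K V)ˣ}
    [Finite (Subgroup.closure S)] [NeZero (Nat.card (Subgroup.closure S) : K)]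
    {W : Submodule K V} (hW : ∀ s ∈ S, W ∈ invtSubmodule (s : Module.End K V)) :
    ∃ W', (∀ s ∈ S, W' ∈ invtSubmodule (s : Module.End K V)) ∧ IsCompl W W' := by
  let σ : Representation K (Subgroup.closure S) V :=
    (Units.coeHom _).comp (Subgroup.closure S).subtype
  obtain ⟨T, hT⟩ := exists_isCompl
    (⟨W, fun g => mem_invtSubmodule_of_mem_closure hW g g.2⟩ : Subrepresentation σ)
  refine ⟨T.toSubmodule, fun s hs => T.apply_mem_toSubmodule ⟨s, Subgroup.subset_closure hs⟩,
    ?_, ?_⟩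
  · exact disjoint_iff.mpr (congrArg Subrepresentation.toSubmodule hT.disjoint.eq_bot)
  · exact codisjoint_iff.mpr (congrArg Subrepresentation.toSubmodule hT.codisjoint.eq_top)

end Maschke

section Decomposition

variable {α : Type*} {P : α → Prop}

theorem exists_finset_supIndep_minimal [Lattice α] [BoundedOrder α] [IsModularLattice α]
    [WellFoundedLT α] [DecidableEq α] (hinf : ∀ a b, P a → P b → P (a ⊓ b))
    (hcompl : ∀ a, P a → ∃ b, P b ∧ IsCompl a b) (a : α) (ha : P a) :
    ∃ s : Finset α, s.SupIndep id ∧ s.sup id = a ∧ ∀ b ∈ s, Minimal (fun b => P b ∧ b ≠ ⊥) b := by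
  induction a using WellFoundedLT.induction with
  | _ a ih =>
  by_cases ha₀ : a = ⊥
  · exact ⟨∅, Finset.supIndep_empty _, ha₀.symm, by simp⟩
  obtain ⟨u, hua, hu⟩ := exists_minimal_le_of_wellFoundedLT (fun b => P b ∧ b ≠ ⊥) a ⟨ha, ha₀⟩
  obtain ⟨c, hc, huc⟩ := hcompl u hu.prop.1
  have hdisj : Disjoint u (c ⊓ a) := huc.disjoint.mono_right inf_le_left
  have hsup : u ⊔ c ⊓ a = a := by
    rw [← sup_inf_assoc_of_le c hua, huc.sup_eq_top, top_inf_eq]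
  have hlt : c ⊓ a < a := by
    refine inf_le_right.lt_of_ne fun h => hu.prop.2 ?_
    rw [h] at hdisj
    exact hdisj.eq_bot_of_le hua
  obtain ⟨s, hs, hsup', hmin⟩ := ih _ hlt (hinf _ _ hc ha)
  refine ⟨insert u s, hs.insert (by rwa [hsup']), by rw [Finset.sup_insert, hsup', id, hsup], ?_⟩
  simpa [Finset.forall_mem_insert] using ⟨hu, hmin⟩

theorem exists_iSupIndep_minimal [CompleteLattice α] [IsModularLattice α] [WellFoundedLT α]
    (hinf : ∀ a b, P a → P b → P (a ⊓ b)) (hcompl : ∀ a, P a → ∃ b, P b ∧ IsCompl a b)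
    (a : α) (ha : P a) :
    ∃ (ι : Type) (f : ι → α), iSupIndep f ∧ ⨆ i, f i = a ∧
      ∀ i, Minimal (fun b => P b ∧ b ≠ ⊥) (f i) := by
  classical
  obtain ⟨s, hs, rfl, hmin⟩ := exists_finset_supIndep_minimal hinf hcompl a ha
  refine ⟨Fin s.card, fun i => s.equivFin.symm i, ?_, ?_, fun i => hmin _ (s.equivFin.symm i).2⟩
  · exact (iSupIndep_comp_coe_iff_supIndep.mpr hs).comp s.equivFin.symm.injective
  · rw [s.equivFin.symm.iSup_comp (g := fun x : s => (x : α)), Finset.sup_eq_iSup, iSup_subtype']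
    rfl

end Decomposition

section CaseIII

variable {Γ V : Type*} [AddCommGroup V] [Module ℂ V] {ρ : Γ → Module.End ℂ V}
  {X Y : Module.End ℂ V}

theorem Stable2.inf {W₁ W₂ : Submodule ℂ V} (h₁ : Stable2 ρ X Y W₁) (h₂ : Stable2 ρ X Y W₂) :
    Stable2 ρ X Y (W₁ ⊓ W₂) :=
  ⟨fun v hv => ⟨h₁.1 v hv.1, h₂.1 v hv.2⟩, fun v hv => ⟨h₁.2.1 v hv.1, h₂.2.1 v hv.2⟩,
    fun h v hv => ⟨h₁.2.2 h v hv.1, h₂.2.2 h v hv.2⟩⟩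

theorem stable2_top : Stable2 ρ X Y ⊤ :=
  ⟨fun _ _ => Submodule.mem_top, fun _ _ => Submodule.mem_top, fun _ _ _ => Submodule.mem_top⟩

theorem stable2_iff_forall_mem_invtSubmodule (hT : ∀ a ∈ ({X, Y} ∪ Set.range ρ), IsUnit a)
    {W : Submodule ℂ V} :
    Stable2 ρ X Y W ↔
      ∀ u ∈ Units.val ⁻¹' ({X, Y} ∪ Set.range ρ), W ∈ invtSubmodule (u : Module.End ℂ V) := by
  have hS : Stable2 ρ X Y W ↔ ∀ a ∈ ({X, Y} ∪ Set.range ρ), W ∈ invtSubmodule a := by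
    simp [Stable2, mem_invtSubmodule_iff_forall_mem_of_mem, or_imp, forall_and, and_assoc]
  refine hS.trans ⟨fun h u hu => h _ hu, fun h a ha => ?_⟩
  obtain ⟨u, rfl⟩ := hT a ha
  exact h u ha

variable [CommGroup Γ] [Fintype Γ] {χ₁ χ₂ : Γ →* ℂˣ} {Λ : Subgroup Γ} {ξ : Λ →* ℂˣ}

theorem IsRep.exists_pow_eq_one (hrep : IsRep χ₁ χ₂ Λ ξ ρ X Y) {r s : ℕ} (hr : r ≠ 0)
    (hs : s ≠ 0) (hX : X ^ r = 1) (hY : Y ^ s = 1) :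
    ∀ a ∈ ({X, Y} ∪ Set.range ρ), ∃ m ≠ 0, a ^ m = 1 := by
  rintro a ((rfl | rfl) | ⟨h, rfl⟩)
  · exact ⟨r, hr, hX⟩
  · exact ⟨s, hs, hY⟩
  · let ρ' : Γ →* Module.End ℂ V := ⟨⟨ρ, hrep.2.1⟩, hrep.1⟩
    refine ⟨Fintype.card Γ, Fintype.card_ne_zero, ?_⟩
    calc ρ h ^ Fintype.card Γ = ρ' (h ^ Fintype.card Γ) := (map_pow ρ' h _).symm
      _ = 1 := by rw [pow_card_eq_one, map_one]

theorem IsRep.exists_smul_comm (hrep : IsRep χ₁ χ₂ Λ ξ ρ X Y) {g : Γ}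
    (hXY : X * Y = (χ₂ g : ℂ) • (Y * X)) :
    ∀ a ∈ ({X, Y} ∪ Set.range ρ), ∀ b ∈ ({X, Y} ∪ Set.range ρ),
      ∃ c : ℂˣ, c ^ Fintype.card Γ = 1 ∧ a * b = (c : ℂ) • (b * a) := by
  obtain ⟨hmul, -, hρX, hρY, -⟩ := hrep
  have hχ (χ : Γ →* ℂˣ) (h : Γ) : χ h ^ Fintype.card Γ = 1 := by
    rw [← map_pow, pow_card_eq_one, map_one]
  have hself (a : Module.End ℂ V) : ∃ c : ℂˣ, c ^ Fintype.card Γ = 1 ∧ a * a = (c : ℂ) • (a * a) :=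
    ⟨1, one_pow _, by rw [Units.val_one, one_smul]⟩
  have hsymm {a b : Module.End ℂ V} {c : ℂˣ} (hc : c ^ Fintype.card Γ = 1)
      (h : a * b = (c : ℂ) • (b * a)) :
      ∃ c : ℂˣ, c ^ Fintype.card Γ = 1 ∧ b * a = (c : ℂ) • (a * b) :=
    ⟨c⁻¹, by rw [inv_pow, hc, inv_one],
      by rw [h, ← Units.smul_def, ← Units.smul_def, inv_smul_smul]⟩
  rintro a ((rfl | rfl) | ⟨h, rfl⟩) b ((rfl | rfl) | ⟨h', rfl⟩)
  · exact hself _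
  · exact ⟨_, hχ χ₂ g, hXY⟩
  · exact hsymm (hχ χ₁ h') (hρX h')
  · exact hsymm (hχ χ₂ g) hXY
  · exact hself _
  · exact hsymm (hχ χ₂ h') (hρY h')
  · exact ⟨_, hχ χ₁ h, hρX h⟩
  · exact ⟨_, hχ χ₂ h, hρY h⟩
  · exact ⟨1, one_pow _, by rw [← hmul, mul_comm, hmul, Units.val_one, one_smul]⟩

theorem IsRep.finite_closure (hrep : IsRep χ₁ χ₂ Λ ξ ρ X Y) {g : Γ}
    (hXY : X * Y = (χ₂ g : ℂ) • (Y * X)) {r s : ℕ} (hr : r ≠ 0) (hs : s ≠ 0) (hX : X ^ r = 1)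
    (hY : Y ^ s = 1) :
    Finite (Subgroup.closure (Units.val ⁻¹' ({X, Y} ∪ Set.range ρ))) := by
  let φ : ℂˣ →* (Module.End ℂ V)ˣ := Units.map (algebraMap ℂ (Module.End ℂ V) : ℂ →* _)
  let C := (rootsOfUnity (Fintype.card Γ) ℂ).map φ
  have : C.Normal := ⟨by
    rintro _ ⟨c, hc, rfl⟩ u
    have hcomm : u * φ c = φ c * u := Units.ext (Algebra.commutes (c : ℂ) (u : Module.End ℂ V)).symm
    rw [hcomm, mul_inv_cancel_right]
    exact ⟨c, hc, rfl⟩⟩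
  have : Finite C := Finite.of_surjective _ (φ.subgroupMap_surjective _)
  have : Finite (Units.val ⁻¹' ({X, Y} ∪ Set.range ρ)) :=
    ((Set.toFinite _).preimage Units.val_injective.injOn).to_subtype
  refine Subgroup.finite_closure_of_commutator_mem (C := C) (fun u hu => ?_) fun u hu v hv => ?_
  · obtain ⟨m, hm, hpow⟩ := hrep.exists_pow_eq_one hr hs hX hY u hu
    exact isOfFinOrder_iff_pow_eq_one.mpr ⟨m, Nat.pos_of_ne_zero hm, Units.ext (by simpa)⟩
  · obtain ⟨c, hc, huv⟩ := hrep.exists_smul_comm hXY u hu v hv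
    rw [Units.commutatorElement_eq_map_algebraMap huv]
    exact ⟨c, (mem_rootsOfUnity _ c).mpr hc, rfl⟩

theorem IsRep.exists_isCompl_stable2 (hrep : IsRep χ₁ χ₂ Λ ξ ρ X Y) {g : Γ}
    (hXY : X * Y = (χ₂ g : ℂ) • (Y * X)) {r s : ℕ} (hr : r ≠ 0) (hs : s ≠ 0) (hX : X ^ r = 1)
    (hY : Y ^ s = 1) {W : Submodule ℂ V} (hW : Stable2 ρ X Y W) :
    ∃ W', Stable2 ρ X Y W' ∧ IsCompl W W' := by
  have := hrep.finite_closure hXY hr hs hX hY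
  have hunit (a) (ha : a ∈ ({X, Y} ∪ Set.range ρ)) : IsUnit a :=
    have ⟨m, hm, hpow⟩ := hrep.exists_pow_eq_one hr hs hX hY a ha
    IsUnit.of_pow_eq_one hpow hm
  simp only [stable2_iff_forall_mem_invtSubmodule hunit] at hW ⊢
  exact exists_isCompl_invtSubmodule_of_finite_closure hW

end CaseIII

theorem caseIII_semisimple_general {Γ : Type*} [CommGroup Γ] [Fintype Γ] (g₁ : Γ)
    (χ₁ χ₂ : Γ →* ℂˣ)
    (r : ℕ) (hr : 1 < r)
    (s : ℕ) (hs : 1 < s)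
    (Λ : Subgroup Γ) (ξ : ↥Λ →* ℂˣ)
    (V : Type*) [AddCommGroup V] [Module ℂ V] [FiniteDimensional ℂ V]
    (ρ : Γ → Module.End ℂ V) (X Y : Module.End ℂ V)
    (hrep : IsRep χ₁ χ₂ Λ ξ ρ X Y)
    (hX : X ^ r = 1) (hY : Y ^ s = 1)
    (hXY : X * Y = (χ₂ g₁ : ℂ) • (Y * X)) :
    ∃ (ι : Type) (W : ι → Submodule ℂ V),
      iSupIndep W ∧ (⨆ i, W i) = ⊤ ∧
      ∀ i : ι, Stable2 ρ X Y (W i) ∧ W i ≠ ⊥ ∧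
        ∀ U : Submodule ℂ V, U ≤ W i → Stable2 ρ X Y U → U = ⊥ ∨ U = W i := by
  obtain ⟨ι, W, hind, hsup, hmin⟩ := exists_iSupIndep_minimal (fun _ _ => Stable2.inf)
    (fun _ => hrep.exists_isCompl_stable2 hXY (by omega) (by omega) hX hY) ⊤ stable2_top
  refine ⟨ι, W, hind, hsup, fun i => ⟨(hmin i).prop.1, (hmin i).prop.2, fun U hU hUst => ?_⟩⟩
  by_cases hU₀ : U = ⊥
  · exact Or.inl hU₀
  · exact Or.inr ((hmin i).eq_of_le ⟨hUst, hU₀⟩ hU)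

/-- Case (III): suppose `χ₁` has order exactly `r` and `χ₂` has order exactly `s`. Then
every representation `(V, ρ, X, Y)` with `X^r = id`, `Y^s = id` and
`X∘Y = χ₂(g₁)·(Y∘X)` decomposes as a direct sum (an independent spanning family) of
subspaces, each stable under `X`, `Y` and all `ρ(h)` and irreducible under this action;
i.e. the algebra `A(ξ)` of case (III) is semisimple. -/
theorem caseIII_semisimple {Γ : Type*} [CommGroup Γ] [Fintype Γ] (g₁ g₂ : Γ)
    (χ₁ χ₂ : Γ →* ℂˣ) (h12 : χ₁ g₂ * χ₂ g₁ = 1)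
    (r : ℕ) (hr : 1 < r) (hq : IsPrimitiveRoot ((χ₁ g₁ : ℂˣ) : ℂ) r)
    (hord₁ : orderOf χ₁ = r)
    (s : ℕ) (hs : 1 < s) (hq₂ : IsPrimitiveRoot ((χ₂ g₂ : ℂˣ) : ℂ) s)
    (hord₂ : orderOf χ₂ = s)
    (Λ : Subgroup Γ) (hΛ : ∀ g : Γ, g ∈ Λ ↔ (χ₁ g = 1 ∧ χ₂ g = 1)) (ξ : ↥Λ →* ℂˣ)
    (V : Type*) [AddCommGroup V] [Module ℂ V] [FiniteDimensional ℂ V]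
    (ρ : Γ → Module.End ℂ V) (X Y : Module.End ℂ V)
    (hrep : IsRep χ₁ χ₂ Λ ξ ρ X Y)
    (hX : X ^ r = 1) (hY : Y ^ s = 1)
    (hXY : X * Y = (χ₂ g₁ : ℂ) • (Y * X)) :
    ∃ (ι : Type) (W : ι → Submodule ℂ V),
      iSupIndep W ∧ (⨆ i, W i) = ⊤ ∧
      ∀ i : ι, Stable2 ρ X Y (W i) ∧ W i ≠ ⊥ ∧
        ∀ U : Submodule ℂ V, U ≤ W i → Stable2 ρ X Y U → U = ⊥ ∨ U = W i :=
  caseIII_semisimple_general g₁ χ₁ χ₂ r hr s hs Λ ξ V ρ X Y hrep hX hY hXY
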